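/- arXiv:1609.00864 — 8 statements merged into one kernel-verified Lean document; each statement's English description precedes it below -/
import Mathlib

section
/- Let L ≥ 1 and let σ be a permutation of {1,…,L}. For k = 1, 2 let G_k be a real L×L matrix with zero diagonal entries such that (G_k)_{σ(i),σ(j)} = 0 whenever i ≥ j (i.e., both matrices become strictly upper triangular after conjugation by the same permutation), and let Λ₁, Λ₂ be L×L real diagonal matrices with strictly positive diagonal entries. Then I − G₁ and I − G₂ are invertible, and if (I−G₁)⁻¹ Λ₁ (I−G₁)⁻ᵀ = (I−G₂)⁻¹ Λ₂ (I−G₂)⁻ᵀ, then G₁ = G₂ and Λ₁ = Λ₂. -/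
/-!
Order the nodes by `σ⁻¹`. Then `Uₖ = 1 - Gₖ` is unit upper triangular, so it is invertible,
and the hypothesis says that `U₁⁻¹ Λ₁ U₁⁻ᵀ = U₂⁻¹ Λ₂ U₂⁻ᵀ` are two `LDLᵀ` factorisations of
the same matrix. For the unitriangular `V = U₂ U₁⁻¹` this reads `V Λ₁ Vᵀ = Λ₂`, so
`V Λ₁ = Λ₂ V⁻ᵀ` is both upper and lower triangular, hence diagonal; as `Λ₁` is invertible,
`V` is diagonal with unit diagonal, i.e. `V = 1`.
-/

open Matrix Function

namespace Matrix

variable {α m R : Type*} [LinearOrder α] {b : m → α}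

theorem BlockTriangular.mul_apply_self [Fintype m] [NonUnitalNonAssocSemiring R]
    (hb : Injective b) {P Q : Matrix m m R} (hP : P.BlockTriangular b)
    (hQ : Q.BlockTriangular b) (i : m) : (P * Q) i i = P i i * Q i i := by
  rw [mul_apply]
  refine Finset.sum_eq_single i (fun k _ hk => ?_) (by simp)
  rcases lt_trichotomy (b k) (b i) with h | h | h
  · rw [hP h, zero_mul]
  · exact absurd (hb h) hk
  · rw [hQ h, mul_zero]

theorem BlockTriangular.isDiag_of_transpose [Zero R] (hb : Injective b) {M : Matrix m m R}
    (hM : M.BlockTriangular b) (hMt : Mᵀ.BlockTriangular b) : M.IsDiag := by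
  intro i j hij
  rcases lt_or_gt_of_ne (hb.ne hij) with h | h
  · exact hMt h
  · exact hM h

theorem BlockTriangular.det_eq_prod_diag [Fintype m] [DecidableEq m] [CommRing R]
    (hb : Injective b) {M : Matrix m m R} (hM : M.BlockTriangular b) : M.det = ∏ i, M i i :=
  -- `M` is upper triangular for the order on `m` pulled back along `b`.
  letI : LinearOrder m := LinearOrder.lift' b hb
  det_of_isUpperTriangular hM

def IsUnitriangular [Zero R] [One R] (b : m → α) (M : Matrix m m R) : Prop :=
  M.BlockTriangular b ∧ ∀ i, M i i = 1

theorem isUnitriangular_one_sub [DecidableEq m] [Ring R] {G : Matrix m m R}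
    (hG : ∀ i j, b j ≤ b i → G i j = 0) : (1 - G).IsUnitriangular b := by
  refine ⟨fun i j hij => ?_, fun i => ?_⟩
  · rw [sub_apply, one_apply_ne fun h => hij.ne (congrArg b h.symm), hG i j hij.le, sub_zero]
  · rw [sub_apply, one_apply_eq, hG i i le_rfl, sub_zero]

namespace IsUnitriangular

variable [Fintype m]

theorem mul [Semiring R] (hb : Injective b) {M N : Matrix m m R} (hM : M.IsUnitriangular b)
    (hN : N.IsUnitriangular b) : (M * N).IsUnitriangular b :=
  ⟨hM.1.mul hN.1, fun i => by rw [hM.1.mul_apply_self hb hN.1, hM.2, hN.2, one_mul]⟩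

variable [DecidableEq m] [CommRing R] {M N : Matrix m m R}

theorem det_eq_one (hb : Injective b) (hM : M.IsUnitriangular b) : M.det = 1 := by
  rw [hM.1.det_eq_prod_diag hb]
  exact Finset.prod_eq_one fun i _ => hM.2 i

theorem isUnit_det (hb : Injective b) (hM : M.IsUnitriangular b) : IsUnit M.det :=
  (hM.det_eq_one hb).symm ▸ isUnit_one

theorem inv (hb : Injective b) (hM : M.IsUnitriangular b) : M⁻¹.IsUnitriangular b := by
  have := M.invertibleOfIsUnitDet (hM.isUnit_det hb)
  have hMinv : M⁻¹.BlockTriangular b := blockTriangular_inv_of_blockTriangular hM.1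
  refine ⟨hMinv, fun i => ?_⟩
  have h := hM.1.mul_apply_self hb hMinv i
  rwa [mul_inv_of_invertible, one_apply_eq, hM.2, one_mul, eq_comm] at h

variable [NoZeroDivisors R]

theorem eq_one_of_mul_diagonal_mul_transpose_eq_diagonal (hb : Injective b)
    (hM : M.IsUnitriangular b) {d₁ d₂ : m → R} (hd₁ : ∀ i, d₁ i ≠ 0)
    (h : M * diagonal d₁ * Mᵀ = diagonal d₂) : M = 1 := by
  -- `M * diagonal d₁` is upper triangular, and lower triangular as `diagonal d₂ * M⁻¹ᵀ`.
  have hfactor : M * diagonal d₁ = diagonal d₂ * M⁻¹ᵀ := by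
    rw [← h, mul_assoc _ Mᵀ, ← transpose_mul, nonsing_inv_mul M (hM.isUnit_det hb),
      transpose_one, mul_one]
  have hdiag : (M * diagonal d₁).IsDiag := by
    refine (hM.1.mul (blockTriangular_diagonal d₁)).isDiag_of_transpose hb ?_
    rw [hfactor, transpose_mul, transpose_transpose, diagonal_transpose]
    exact (hM.inv hb).1.mul (blockTriangular_diagonal d₂)
  ext i j
  by_cases hij : i = j
  · rw [hij, hM.2, one_apply_eq]
  · have h0 : (M * diagonal d₁) i j = 0 := hdiag hij
    rw [mul_diagonal] at h0
    rw [(mul_eq_zero.mp h0).resolve_right (hd₁ j), one_apply_ne hij]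

/-- Uniqueness of the `LDLᵀ` factorisation. -/
theorem eq_of_mul_diagonal_mul_transpose_eq (hb : Injective b) (hM : M.IsUnitriangular b)
    (hN : N.IsUnitriangular b) {d₁ d₂ : m → R} (hd₁ : ∀ i, d₁ i ≠ 0)
    (h : M * diagonal d₁ * Mᵀ = N * diagonal d₂ * Nᵀ) : M = N ∧ d₁ = d₂ := by
  have hNN : N⁻¹ * N = 1 := nonsing_inv_mul N (hN.isUnit_det hb)
  have hV : N⁻¹ * M * diagonal d₁ * (N⁻¹ * M)ᵀ = diagonal d₂ :=
    calc N⁻¹ * M * diagonal d₁ * (N⁻¹ * M)ᵀ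
        = N⁻¹ * (M * diagonal d₁ * Mᵀ) * N⁻¹ᵀ := by rw [transpose_mul]; simp only [mul_assoc]
      _ = (N⁻¹ * N) * diagonal d₂ * (N⁻¹ * N)ᵀ := by
          rw [h, transpose_mul]; simp only [mul_assoc]
      _ = diagonal d₂ := by rw [hNN, transpose_one, one_mul, mul_one]
  have hV1 := ((hN.inv hb).mul hb hM).eq_one_of_mul_diagonal_mul_transpose_eq_diagonal hb hd₁ hV
  have hMN : M = N := by
    rw [← one_mul M, ← mul_nonsing_inv N (hN.isUnit_det hb), mul_assoc, hV1, mul_one]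
  refine ⟨hMN, diagonal_injective ?_⟩
  rwa [hV1, one_mul, transpose_one, mul_one] at hV

end IsUnitriangular

end Matrix

theorem feedthrough_and_covariance_unique_general (L : ℕ) (σ : Equiv.Perm (Fin L))
    (G₁ G₂ Λ₁ Λ₂ : Matrix (Fin L) (Fin L) ℝ)
    (hG₁ : ∀ i j : Fin L, j ≤ i → G₁ (σ i) (σ j) = 0)
    (hG₂ : ∀ i j : Fin L, j ≤ i → G₂ (σ i) (σ j) = 0)
    (hΛ₁ : Λ₁.IsDiag) (hΛ₂ : Λ₂.IsDiag)
    (hΛ₁p : ∀ i : Fin L, 0 < Λ₁ i i) :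
    IsUnit (1 - G₁).det ∧ IsUnit (1 - G₂).det ∧
      ((1 - G₁)⁻¹ * Λ₁ * ((1 - G₁)⁻¹)ᵀ = (1 - G₂)⁻¹ * Λ₂ * ((1 - G₂)⁻¹)ᵀ →
        G₁ = G₂ ∧ Λ₁ = Λ₂) := by
  have hb : Injective σ.symm := σ.symm.injective
  have hU₁ : (1 - G₁).IsUnitriangular σ.symm :=
    isUnitriangular_one_sub fun i j h => by simpa using hG₁ _ _ h
  have hU₂ : (1 - G₂).IsUnitriangular σ.symm :=
    isUnitriangular_one_sub fun i j h => by simpa using hG₂ _ _ h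
  refine ⟨hU₁.isUnit_det hb, hU₂.isUnit_det hb, fun h => ?_⟩
  rw [← hΛ₁.diagonal_diag, ← hΛ₂.diagonal_diag] at h ⊢
  obtain ⟨hinv, hd⟩ := (hU₁.inv hb).eq_of_mul_diagonal_mul_transpose_eq hb (hU₂.inv hb)
    (fun i => (hΛ₁p i).ne') h
  exact ⟨sub_right_injective (inv_inj hinv (hU₁.isUnit_det hb)), congrArg diagonal hd⟩

/-- Algebraic core of Proposition 2 (full-rank noise case): if a common permutation `σ`
renders `G₁` and `G₂` strictly upper triangular (no algebraic loops), and `Λ₁, Λ₂` are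
diagonal positive matrices, then `I - G₁`, `I - G₂` are invertible and the spectrum value
`(I-G)⁻¹ Λ (I-G)⁻ᵀ` uniquely determines `G` and `Λ`. -/
theorem feedthrough_and_covariance_unique (L : ℕ) (hL : 1 ≤ L) (σ : Equiv.Perm (Fin L))
    (G₁ G₂ Λ₁ Λ₂ : Matrix (Fin L) (Fin L) ℝ)
    (hG₁d : ∀ i : Fin L, G₁ i i = 0)
    (hG₂d : ∀ i : Fin L, G₂ i i = 0)
    (hG₁ : ∀ i j : Fin L, j ≤ i → G₁ (σ i) (σ j) = 0)
    (hG₂ : ∀ i j : Fin L, j ≤ i → G₂ (σ i) (σ j) = 0)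
    (hΛ₁ : Λ₁.IsDiag) (hΛ₂ : Λ₂.IsDiag)
    (hΛ₁p : ∀ i : Fin L, 0 < Λ₁ i i)
    (hΛ₂p : ∀ i : Fin L, 0 < Λ₂ i i) :
    IsUnit (1 - G₁).det ∧ IsUnit (1 - G₂).det ∧
      ((1 - G₁)⁻¹ * Λ₁ * ((1 - G₁)⁻¹)ᵀ = (1 - G₂)⁻¹ * Λ₂ * ((1 - G₂)⁻¹)ᵀ →
        G₁ = G₂ ∧ Λ₁ = Λ₂) :=
  feedthrough_and_covariance_unique_general L σ G₁ G₂ Λ₁ Λ₂ hG₁ hG₂ hΛ₁ hΛ₂ hΛ₁p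
end

section
/- Let 𝕂 be a field and let L, m be positive integers with m ≥ L. For k = 0, 1 let G_k be an L×L matrix over 𝕂 with zero diagonal entries such that I − G_k is invertible, and let U_k be an L×m matrix over 𝕂. Suppose there is an invertible m×m matrix Q over 𝕂 (the same for k = 0 and k = 1) such that U_k Q = [D_k F_k], where D_k is an L×L diagonal invertible matrix and F_k is an L×(m−L) matrix. If (I−G₁)⁻¹ U₁ = (I−G₀)⁻¹ U₀, then G₁ = G₀ and U₁ = U₀ (and hence D₁ = D₀). -/
open Matrix

/-!
Put `X := (I - G₁)(I - G₀)⁻¹`. Equality of the transfer matrices says `U₁ = X U₀`, hence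
`D₁ = X D₀` for the leading blocks of `U₁ Q` and `U₀ Q`; as `D₀` is diagonal and invertible and `D₁`
is diagonal, `X` is diagonal. Finally `X (I - G₀) = I - G₁`, and both `I - G₀` and `I - G₁` have
unit diagonal, so the diagonal entries of `X` are `1`: `X = I`.
-/

namespace Matrix

variable {n α : Type*} [DecidableEq n]

theorem one_sub_apply_self [AddGroupWithOne α] {G : Matrix n n α} (i : n) (hG : G i i = 0) :
    (1 - G) i i = 1 := by
  rw [sub_apply, one_apply_eq, hG, sub_zero]

variable [Fintype n]

theorem IsDiag.of_mul_eq [NonUnitalNonAssocSemiring α] [NoZeroDivisors α]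
    {X A B : Matrix n n α} (hA : A.IsDiag) (hAd : ∀ i, A i i ≠ 0) (hB : B.IsDiag)
    (h : X * A = B) : X.IsDiag := by
  intro i j hij
  have hXA : X i j * A j j = 0 := by
    have hXA_ij := congr_fun₂ h i j
    rwa [← hA.diagonal_diag, mul_diagonal, diag_apply, hB hij] at hXA_ij
  exact (mul_eq_zero.mp hXA).resolve_right (hAd j)

theorem IsDiag.eq_one_of_mul_eq [NonAssocSemiring α] {X A B : Matrix n n α} (hX : X.IsDiag)
    (hA : ∀ i, A i i = 1) (hB : ∀ i, B i i = 1) (h : X * A = B) : X = 1 := by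
  rw [← hX.diagonal_diag, ← diagonal_one]
  congr 1
  funext i
  have hii := congr_fun₂ h i i
  rwa [← hX.diagonal_diag, diagonal_mul, hA, hB, mul_one] at hii

end Matrix

theorem global_identifiability_leading_diagonal_general
    {𝕂 : Type*} [Field 𝕂] (L m : ℕ) (hLm : L ≤ m)
    (G₀ G₁ : Matrix (Fin L) (Fin L) 𝕂) (U₀ U₁ : Matrix (Fin L) (Fin m) 𝕂)
    (hG₀d : ∀ i : Fin L, G₀ i i = 0) (hG₁d : ∀ i : Fin L, G₁ i i = 0)
    (hG₀inv : IsUnit (1 - G₀).det) (hG₁inv : IsUnit (1 - G₁).det)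
    (Q : Matrix (Fin m) (Fin m) 𝕂)
    -- the leading `L × L` block of `U₀ * Q` is diagonal with nonzero diagonal entries
    (hD₀ : ∀ (i : Fin L) (j : Fin m), (j : ℕ) < L → (i : ℕ) ≠ (j : ℕ) → (U₀ * Q) i j = 0)
    (hD₀inv : ∀ i : Fin L, (U₀ * Q) i ⟨(i : ℕ), lt_of_lt_of_le i.isLt hLm⟩ ≠ 0)
    -- the leading `L × L` block of `U₁ * Q` is diagonal with nonzero diagonal entries
    (hD₁ : ∀ (i : Fin L) (j : Fin m), (j : ℕ) < L → (i : ℕ) ≠ (j : ℕ) → (U₁ * Q) i j = 0)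
    (h : (1 - G₁)⁻¹ * U₁ = (1 - G₀)⁻¹ * U₀) :
    G₁ = G₀ ∧ U₁ = U₀ := by
  set X := (1 - G₁) * (1 - G₀)⁻¹
  have hXG : X * (1 - G₀) = 1 - G₁ := nonsing_inv_mul_cancel_right _ _ hG₀inv
  have hU : U₁ = X * U₀ := by
    rw [Matrix.mul_assoc, ← h, mul_nonsing_inv_cancel_left _ _ hG₁inv]
  let lead (U : Matrix (Fin L) (Fin m) 𝕂) := (U * Q).submatrix id (Fin.castLE hLm)
  have hlead : X * lead U₀ = lead U₁ := by
    simp only [lead, hU, Matrix.mul_assoc, submatrix_mul _ _ id id _ Function.bijective_id,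
      submatrix_id_id]
  have hX : X.IsDiag :=
    IsDiag.of_mul_eq (A := lead U₀) (B := lead U₁)
      (fun i j hij => hD₀ i _ j.isLt (Fin.val_ne_of_ne hij)) hD₀inv
      (fun i j hij => hD₁ i _ j.isLt (Fin.val_ne_of_ne hij)) hlead
  have hX1 : X = 1 :=
    hX.eq_one_of_mul_eq (fun i => one_sub_apply_self i (hG₀d i))
      (fun i => one_sub_apply_self i (hG₁d i)) hXG
  rw [hX1, Matrix.one_mul] at hXG hU
  exact ⟨(sub_right_injective hXG).symm, hU⟩

/-- Algebraic core of Theorem 1 of the paper: if the input matrices `U₀, U₁` of two network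
models can be brought, by one and the same invertible column operation `Q`, to the form
`[D  F]` with `D` a leading `L × L` diagonal invertible block, then equality of the network
transfer matrices `(I-G)⁻¹ U` forces the two models to coincide. -/
theorem global_identifiability_leading_diagonal
    {𝕂 : Type*} [Field 𝕂] (L m : ℕ) (hL : 0 < L) (hLm : L ≤ m)
    (G₀ G₁ : Matrix (Fin L) (Fin L) 𝕂) (U₀ U₁ : Matrix (Fin L) (Fin m) 𝕂)
    (hG₀d : ∀ i : Fin L, G₀ i i = 0) (hG₁d : ∀ i : Fin L, G₁ i i = 0)
    (hG₀inv : IsUnit (1 - G₀).det) (hG₁inv : IsUnit (1 - G₁).det)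
    (Q : Matrix (Fin m) (Fin m) 𝕂) (hQ : IsUnit Q.det)
    -- the leading `L × L` block of `U₀ * Q` is diagonal with nonzero diagonal entries
    (hD₀ : ∀ (i : Fin L) (j : Fin m), (j : ℕ) < L → (i : ℕ) ≠ (j : ℕ) → (U₀ * Q) i j = 0)
    (hD₀inv : ∀ i : Fin L, (U₀ * Q) i ⟨(i : ℕ), lt_of_lt_of_le i.isLt hLm⟩ ≠ 0)
    -- the leading `L × L` block of `U₁ * Q` is diagonal with nonzero diagonal entries
    (hD₁ : ∀ (i : Fin L) (j : Fin m), (j : ℕ) < L → (i : ℕ) ≠ (j : ℕ) → (U₁ * Q) i j = 0)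
    (hD₁inv : ∀ i : Fin L, (U₁ * Q) i ⟨(i : ℕ), lt_of_lt_of_le i.isLt hLm⟩ ≠ 0)
    (h : (1 - G₁)⁻¹ * U₁ = (1 - G₀)⁻¹ * U₀) :
    G₁ = G₀ ∧ U₁ = U₀ :=
  global_identifiability_leading_diagonal_general L m hLm G₀ G₁ U₀ U₁ hG₀d hG₁d hG₀inv hG₁inv Q hD₀
    hD₀inv hD₁ h
end

section
/- Let 𝕂 be a field and let L, m be positive integers with m ≥ L. For k = 0, 1 let G_k be an L×L matrix over 𝕂 with zero diagonal entries such that I − G_k is invertible, and let U_k be an L×m matrix over 𝕂. Suppose there is an injective map c : {1,…,L} → {1,…,m} such that for k = 0, 1 and every i ∈ {1,…,L}: (U_k)_{i, c(i)} ≠ 0 and (U_k)_{j, c(i)} = 0 for all j ≠ i. If (I−G₁)⁻¹ U₁ = (I−G₀)⁻¹ U₀, then G₁ = G₀ and U₁ = U₀. -/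
/-!
Put `M := (I - G₁)(I - G₀)⁻¹`, so that `M U₀ = U₁` and `M (I - G₀) = I - G₁`. Column `c i` of
`U₀` is a nonzero multiple of the unit vector `eᵢ`, so column `c i` of `U₁` is that multiple of
the `i`-th column of `M`; as it vanishes off row `i`, `M` is diagonal. Since `I - G₀` and `I - G₁`
have unit diagonal, comparing diagonals in `M (I - G₀) = I - G₁` gives `M = I`.
-/

open Matrix

namespace Matrix

variable {l n o R : Type*}

theorem diag_one_sub_of_diag_eq_zero [DecidableEq n] [AddGroupWithOne R] {G : Matrix n n R}
    (hG : ∀ i, G i i = 0) : (1 - G).diag = 1 :=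
  funext fun i => by simp [hG i]

variable [Fintype n]

theorem mul_apply_of_col_eq_zero_of_ne [NonUnitalNonAssocSemiring R] (M : Matrix l n R)
    {A : Matrix n o R} {i : n} {a : o} (hA : ∀ j, j ≠ i → A j a = 0) (k : l) :
    (M * A) k a = M k i * A i a :=
  Finset.sum_eq_single i (fun j _ hj => mul_eq_zero_of_right _ (hA j hj)) (by simp)

theorem isDiag_of_mul_eq [NonUnitalNonAssocSemiring R] [NoZeroDivisors R]
    {M : Matrix n n R} {A B : Matrix n o R} (hMA : M * A = B) (c : n → o)
    (hA : ∀ i, A i (c i) ≠ 0 ∧ ∀ j, j ≠ i → A j (c i) = 0)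
    (hB : ∀ i j, j ≠ i → B j (c i) = 0) : M.IsDiag := by
  intro j i hji
  have hcol : M j i * A i (c i) = 0 := by
    rw [← mul_apply_of_col_eq_zero_of_ne M (hA i).2, hMA, hB i j hji]
  exact (mul_eq_zero.mp hcol).resolve_right (hA i).1

theorem IsDiag.eq_one_of_diag_mul [DecidableEq n] [NonAssocSemiring R] {M A : Matrix n n R}
    (hM : M.IsDiag) (hA : A.diag = 1) (hMA : (M * A).diag = 1) : M = 1 := by
  obtain ⟨d, rfl⟩ : ∃ d, M = diagonal d := ⟨_, hM.diagonal_diag.symm⟩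
  have hd : d = 1 := funext fun i => by
    simpa [diagonal_mul, show A i i = 1 from congrFun hA i] using congrFun hMA i
  rw [hd]
  exact diagonal_one

end Matrix

theorem global_identifiability_own_excitation_general
    {𝕂 : Type*} [Field 𝕂] (L m : ℕ)
    (G₀ G₁ : Matrix (Fin L) (Fin L) 𝕂) (U₀ U₁ : Matrix (Fin L) (Fin m) 𝕂)
    (hG₀d : ∀ i : Fin L, G₀ i i = 0) (hG₁d : ∀ i : Fin L, G₁ i i = 0)
    (hG₀inv : IsUnit (1 - G₀).det) (hG₁inv : IsUnit (1 - G₁).det)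
    (c : Fin L → Fin m)
    (hc₀ : ∀ i : Fin L, U₀ i (c i) ≠ 0 ∧ ∀ j : Fin L, j ≠ i → U₀ j (c i) = 0)
    (hc₁ : ∀ i : Fin L, U₁ i (c i) ≠ 0 ∧ ∀ j : Fin L, j ≠ i → U₁ j (c i) = 0)
    (h : (1 - G₁)⁻¹ * U₁ = (1 - G₀)⁻¹ * U₀) :
    G₁ = G₀ ∧ U₁ = U₀ := by
  set M := (1 - G₁) * (1 - G₀)⁻¹
  have hMU : M * U₀ = U₁ := by
    rw [Matrix.mul_assoc, ← h, mul_nonsing_inv_cancel_left _ _ hG₁inv]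
  have hMG : M * (1 - G₀) = 1 - G₁ := by
    rw [Matrix.mul_assoc, nonsing_inv_mul _ hG₀inv, Matrix.mul_one]
  have hM : M = 1 :=
    (isDiag_of_mul_eq hMU c hc₀ fun i => (hc₁ i).2).eq_one_of_diag_mul
      (diag_one_sub_of_diag_eq_zero hG₀d) (hMG ▸ diag_one_sub_of_diag_eq_zero hG₁d)
  rw [hM, Matrix.one_mul] at hMG hMU
  exact ⟨(sub_right_injective hMG).symm, hMU.symm⟩

/-- Algebraic core of Corollary 1 of the paper: if every node `i` has its own input channel
`c i` (column `c i` of `U_k` has its only nonzero entry in row `i`, for both models), then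
equality of the network transfer matrices `(I-G)⁻¹ U` forces the two models to coincide. -/
theorem global_identifiability_own_excitation
    {𝕂 : Type*} [Field 𝕂] (L m : ℕ) (hL : 0 < L) (hLm : L ≤ m)
    (G₀ G₁ : Matrix (Fin L) (Fin L) 𝕂) (U₀ U₁ : Matrix (Fin L) (Fin m) 𝕂)
    (hG₀d : ∀ i : Fin L, G₀ i i = 0) (hG₁d : ∀ i : Fin L, G₁ i i = 0)
    (hG₀inv : IsUnit (1 - G₀).det) (hG₁inv : IsUnit (1 - G₁).det)
    (c : Fin L → Fin m) (hc : Function.Injective c)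
    (hc₀ : ∀ i : Fin L, U₀ i (c i) ≠ 0 ∧ ∀ j : Fin L, j ≠ i → U₀ j (c i) = 0)
    (hc₁ : ∀ i : Fin L, U₁ i (c i) ≠ 0 ∧ ∀ j : Fin L, j ≠ i → U₁ j (c i) = 0)
    (h : (1 - G₁)⁻¹ * U₁ = (1 - G₀)⁻¹ * U₀) :
    G₁ = G₀ ∧ U₁ = U₀ :=
  global_identifiability_own_excitation_general L m G₀ G₁ U₀ U₁ hG₀d hG₁d hG₀inv hG₁inv c hc₀ hc₁ h
end

section
/- Let 𝕂 be a field, L, m positive integers. For each i ∈ {1,…,L} let α_i ⊆ {1,…,L}\{i} and β_i ⊆ {1,…,m}. For k = 0, 1 let G_k be an L×L matrix over 𝕂 with zero diagonal entries such that I − G_k is invertible, and let U_k be an L×m matrix over 𝕂, and suppose that (G₁)_{ij} = (G₀)_{ij} for every i and every j ∉ α_i, and (U₁)_{ik} = (U₀)_{ik} for every i and every k ∉ β_i. Let T := (I−G₀)⁻¹ U₀. Assume that for every i ∈ {1,…,L}, the family of row vectors obtained by restricting the rows of T indexed by α_i to the columns outside β_i is linearly independent over 𝕂. If (I−G₁)⁻¹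 U₁ = T, then G₁ = G₀ and U₁ = U₀. -/
/-!
With `T` the common transfer matrix, `U_k = (I - G_k) T`, so `(G₀ - G₁) T = U₁ - U₀`.
Row `i` of `G₀ - G₁` is supported on `α i` and row `i` of `U₁ - U₀` vanishes outside `β i`,
so row `i` of `G₀ - G₁` is a linear relation among the rows of `T` indexed by `α i`, restricted
to the columns outside `β i`. Linear independence makes it trivial, hence `G₁ = G₀`, and then
`U₁ = U₀`.
-/

open Matrix

theorem Matrix.eq_zero_of_vecMul_eq_zero_of_linearIndependent {ι κ K : Type*} [Fintype ι]
    [Field K] {T : Matrix ι κ K} {s : Finset ι} {t : Finset κ}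
    (hT : LinearIndependent K fun j : s => fun k : t => T j k)
    {d : ι → K} (hds : ∀ j ∉ s, d j = 0) (hdT : ∀ k ∈ t, (d ᵥ* T) k = 0) : d = 0 := by
  have hcomb : ∑ j : s, d j • (fun k : t => T j k) = 0 := by
    funext k
    have hsupp : ∑ j ∈ s, d j * T j k = ∑ j, d j * T j k :=
      Finset.sum_subset (Finset.subset_univ s) fun j _ hj => by rw [hds j hj, zero_mul]
    simp only [Finset.sum_apply, Pi.smul_apply, smul_eq_mul, Pi.zero_apply,
      Finset.sum_coe_sort s fun j => d j * T j k, hsupp]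
    exact hdT k k.2
  funext j
  by_cases hj : j ∈ s
  · exact Fintype.linearIndependent_iff.mp hT (fun j => d j) hcomb ⟨j, hj⟩
  · exact hds j hj

theorem Matrix.sub_mul_inv_mul_eq_sub_of_inv_mul_eq {n m K : Type*} [Fintype n] [DecidableEq n]
    [CommRing K] {A₀ A₁ : Matrix n n K} {U₀ U₁ : Matrix n m K}
    (h₀ : IsUnit A₀.det) (h₁ : IsUnit A₁.det) (h : A₁⁻¹ * U₁ = A₀⁻¹ * U₀) :
    (A₁ - A₀) * (A₀⁻¹ * U₀) = U₁ - U₀ := by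
  rw [Matrix.sub_mul, ← h, mul_nonsing_inv_cancel_left _ _ h₁, h,
    mul_nonsing_inv_cancel_left _ _ h₀]

theorem global_identifiability_sufficiency_general
    {𝕂 : Type*} [Field 𝕂] (L m : ℕ)
    (α : Fin L → Finset (Fin L))
    (β : Fin L → Finset (Fin m))
    (G₀ G₁ : Matrix (Fin L) (Fin L) 𝕂) (U₀ U₁ : Matrix (Fin L) (Fin m) 𝕂)
    (hG₀inv : IsUnit (1 - G₀).det) (hG₁inv : IsUnit (1 - G₁).det)
    (hGfix : ∀ i j : Fin L, j ∉ α i → G₁ i j = G₀ i j)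
    (hUfix : ∀ (i : Fin L) (k : Fin m), k ∉ β i → U₁ i k = U₀ i k)
    (hrank : ∀ i : Fin L,
      LinearIndependent 𝕂
        (fun j : (α i : Finset (Fin L)) => fun k : ((β i)ᶜ : Finset (Fin m)) =>
          ((1 - G₀)⁻¹ * U₀) (j : Fin L) (k : Fin m)))
    (h : (1 - G₁)⁻¹ * U₁ = (1 - G₀)⁻¹ * U₀) :
    G₁ = G₀ ∧ U₁ = U₀ := by
  have hΔ := sub_mul_inv_mul_eq_sub_of_inv_mul_eq hG₀inv hG₁inv h
  have hG : G₁ = G₀ := by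
    ext i j
    have hrow : (1 - G₁ - (1 - G₀)) i = 0 := by
      refine eq_zero_of_vecMul_eq_zero_of_linearIndependent (hrank i) (fun l hl => ?_)
        fun k hk => ?_
      · simp [hGfix i l hl]
      · rw [← mul_apply_eq_vecMul, hΔ, Matrix.sub_apply, hUfix i k (Finset.mem_compl.mp hk),
          sub_self]
    simpa [sub_eq_zero, eq_comm] using congrFun hrow j
  rw [hG, sub_self, Matrix.zero_mul, eq_comm, sub_eq_zero] at hΔ
  exact ⟨hG, hΔ⟩

/-- Sufficiency part of Theorem 2 of the paper: with parametrized entry patterns `α i`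
(row `i` of `G`, off-diagonal) and `β i` (row `i` of `U`), if for every `i` the rows of
`T := (I-G₀)⁻¹ U₀` indexed by `α i`, restricted to the columns outside `β i`, are linearly
independent, then equality of the network transfer matrices forces model equality. -/
theorem global_identifiability_sufficiency
    {𝕂 : Type*} [Field 𝕂] (L m : ℕ) (hL : 0 < L) (hm : 0 < m)
    (α : Fin L → Finset (Fin L)) (hα : ∀ i : Fin L, i ∉ α i)
    (β : Fin L → Finset (Fin m))
    (G₀ G₁ : Matrix (Fin L) (Fin L) 𝕂) (U₀ U₁ : Matrix (Fin L) (Fin m) 𝕂)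
    (hG₀d : ∀ i : Fin L, G₀ i i = 0) (hG₁d : ∀ i : Fin L, G₁ i i = 0)
    (hG₀inv : IsUnit (1 - G₀).det) (hG₁inv : IsUnit (1 - G₁).det)
    (hGfix : ∀ i j : Fin L, j ∉ α i → G₁ i j = G₀ i j)
    (hUfix : ∀ (i : Fin L) (k : Fin m), k ∉ β i → U₁ i k = U₀ i k)
    (hrank : ∀ i : Fin L,
      LinearIndependent 𝕂
        (fun j : (α i : Finset (Fin L)) => fun k : ((β i)ᶜ : Finset (Fin m)) =>
          ((1 - G₀)⁻¹ * U₀) (j : Fin L) (k : Fin m)))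
    (h : (1 - G₁)⁻¹ * U₁ = (1 - G₀)⁻¹ * U₀) :
    G₁ = G₀ ∧ U₁ = U₀ :=
  global_identifiability_sufficiency_general L m α β G₀ G₁ U₀ U₁ hG₀inv hG₁inv hGfix hUfix hrank h
end

section
/- Let 𝕂 be a field, L, m positive integers, and fix a row index i ∈ {1,…,L}, a set α_i ⊆ {1,…,L}\{i} and a set β_i ⊆ {1,…,m}. For k = 0, 1 let G_k be an L×L matrix over 𝕂 with zero diagonal entries such that I − G_k is invertible, and let U_k be an L×m matrix over 𝕂, and suppose that (G₁)_{ij} = (G₀)_{ij} for every j ∉ α_i and (U₁)_{ik} = (U₀)_{ik} for every k ∉ β_i (only row i is constrained). Let T := (I−G₀)⁻¹ U₀ and assume the family of row vectors obtained by restricting the rows of T indexed by α_i to the columns outside β_i is linearly independent over 𝕂. If (I−G₁)⁻¹ U₁ = T, then row i of G₁ equals row i of G₀ and row i of U₁ equals row i of U₀. -/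
open Matrix

/-
Write `T := (I - G₀)⁻¹ U₀`. Since both models have transfer matrix `T`, we have `U_k = (I - G_k) T`,
so `U₁ - U₀ = (G₀ - G₁) T`. Row `i` of `G₀ - G₁` is supported on `αᵢ` and row `i` of `U₁ - U₀` on
`βᵢ`, so on the columns outside `βᵢ` the vector `(G₀ - G₁)ᵢ` gives a vanishing linear combination of
the rows of `T` indexed by `αᵢ`. The rank condition makes it zero, and then row `i` of `U₁ - U₀`
vanishes as well.
-/

namespace Matrix

variable {ι κ R : Type*}

theorem eq_zero_of_vecMul_eq_zero_of_linearIndependent_s8 [Fintype ι] [Ring R]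
    (T : Matrix ι κ R) {s : Finset ι} {t : Finset κ}
    (hT : LinearIndependent R (fun j : s => fun k : t => T j k))
    {d : ι → R} (hd : ∀ j ∉ s, d j = 0) (h : ∀ k ∈ t, (d ᵥ* T) k = 0) : d = 0 := by
  have hcomb : ∑ j : s, d j • (fun k : t => T j k) = 0 := by
    funext k
    calc (∑ j : s, d j • fun k : t => T j k) k = ∑ j ∈ s, d j * T j k := by
          simp only [Finset.sum_apply, Pi.smul_apply, smul_eq_mul, Finset.univ_eq_attach,
            Finset.sum_attach s fun j => d j * T j k]
      _ = (d ᵥ* T) k := Finset.sum_subset (Finset.subset_univ s) fun j _ hj => by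
          rw [hd j hj, zero_mul]
      _ = 0 := h k k.2
  funext j
  by_cases hj : j ∈ s
  · exact Fintype.linearIndependent_iff.mp hT (fun j : s => d j) hcomb ⟨j, hj⟩
  · exact hd j hj

theorem sub_eq_sub_mul_of_inv_mul_eq [Fintype ι] [DecidableEq ι] [CommRing R]
    {A₀ A₁ : Matrix ι ι R} {U₀ U₁ : Matrix ι κ R} (hA₀ : IsUnit A₀.det) (hA₁ : IsUnit A₁.det)
    (h : A₁⁻¹ * U₁ = A₀⁻¹ * U₀) : U₁ - U₀ = (A₁ - A₀) * (A₀⁻¹ * U₀) := by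
  calc U₁ - U₀ = A₁ * (A₁⁻¹ * U₁) - A₀ * (A₀⁻¹ * U₀) := by
        rw [mul_nonsing_inv_cancel_left (A := A₁) U₁ hA₁,
          mul_nonsing_inv_cancel_left (A := A₀) U₀ hA₀]
    _ = (A₁ - A₀) * (A₀⁻¹ * U₀) := by rw [h, Matrix.sub_mul]

end Matrix

theorem rowwise_identifiability_general
    {𝕂 : Type*} [Field 𝕂] (L m : ℕ)
    (i : Fin L) (αi : Finset (Fin L)) (βi : Finset (Fin m))
    (G₀ G₁ : Matrix (Fin L) (Fin L) 𝕂) (U₀ U₁ : Matrix (Fin L) (Fin m) 𝕂)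
    (hG₀inv : IsUnit (1 - G₀).det) (hG₁inv : IsUnit (1 - G₁).det)
    (hGfix : ∀ j : Fin L, j ∉ αi → G₁ i j = G₀ i j)
    (hUfix : ∀ k : Fin m, k ∉ βi → U₁ i k = U₀ i k)
    (hrank : LinearIndependent 𝕂
      (fun j : (αi : Finset (Fin L)) => fun k : (βiᶜ : Finset (Fin m)) =>
        ((1 - G₀)⁻¹ * U₀) (j : Fin L) (k : Fin m)))
    (h : (1 - G₁)⁻¹ * U₁ = (1 - G₀)⁻¹ * U₀) :
    (∀ j : Fin L, G₁ i j = G₀ i j) ∧ (∀ k : Fin m, U₁ i k = U₀ i k) := by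
  have hdiff : U₁ - U₀ = (G₀ - G₁) * ((1 - G₀)⁻¹ * U₀) := by
    rw [sub_eq_sub_mul_of_inv_mul_eq hG₀inv hG₁inv h, sub_sub_sub_cancel_left]
  have hrow (k : Fin m) : U₁ i k - U₀ i k = ((G₀ - G₁) i ᵥ* ((1 - G₀)⁻¹ * U₀)) k := by
    rw [← mul_apply_eq_vecMul, ← hdiff, Matrix.sub_apply]
  have hGrow : (G₀ - G₁) i = 0 :=
    eq_zero_of_vecMul_eq_zero_of_linearIndependent_s8 _ hrank
      (fun j hj => sub_eq_zero.mpr (hGfix j hj).symm)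
      (fun k hk => by rw [← hrow, hUfix k (Finset.mem_compl.mp hk), sub_self])
  refine ⟨fun j => (sub_eq_zero.mp (congrFun hGrow j)).symm, fun k => sub_eq_zero.mp ?_⟩
  rw [hrow, hGrow, zero_vecMul, Pi.zero_apply]

/-- Row-wise version of the identifiability conditions of Theorem 2 (Remark 7 of the paper):
if the rank condition holds for the single row `i`, and the two models agree on the
non-parametrized entries of row `i`, then equality of the network transfer matrices forces
equality of row `i` of `G` and of row `i` of `U`. -/
theorem rowwise_identifiability
    {𝕂 : Type*} [Field 𝕂] (L m : ℕ) (hL : 0 < L) (hm : 0 < m)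
    (i : Fin L) (αi : Finset (Fin L)) (hαi : i ∉ αi) (βi : Finset (Fin m))
    (G₀ G₁ : Matrix (Fin L) (Fin L) 𝕂) (U₀ U₁ : Matrix (Fin L) (Fin m) 𝕂)
    (hG₀d : ∀ i : Fin L, G₀ i i = 0) (hG₁d : ∀ i : Fin L, G₁ i i = 0)
    (hG₀inv : IsUnit (1 - G₀).det) (hG₁inv : IsUnit (1 - G₁).det)
    (hGfix : ∀ j : Fin L, j ∉ αi → G₁ i j = G₀ i j)
    (hUfix : ∀ k : Fin m, k ∉ βi → U₁ i k = U₀ i k)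
    (hrank : LinearIndependent 𝕂
      (fun j : (αi : Finset (Fin L)) => fun k : (βiᶜ : Finset (Fin m)) =>
        ((1 - G₀)⁻¹ * U₀) (j : Fin L) (k : Fin m)))
    (h : (1 - G₁)⁻¹ * U₁ = (1 - G₀)⁻¹ * U₀) :
    (∀ j : Fin L, G₁ i j = G₀ i j) ∧ (∀ k : Fin m, U₁ i k = U₀ i k) :=
  rowwise_identifiability_general L m i αi βi G₀ G₁ U₀ U₁ hG₀inv hG₁inv hGfix hUfix hrank h
end

section
/- Let 𝕂 be an infinite field, L, m positive integers. Let G₀ be an L×L matrix over 𝕂 with zero diagonal entries such that I − G₀ is invertible, let U₀ be an L×m matrix over 𝕂, and set T := (I−G₀)⁻¹ U₀. Fix a row index i ∈ {1,…,L}, a set α_i ⊆ {1,…,L}\{i} and a set β_i ⊆ {1,…,m}. If the family of row vectors obtained by restricting the rows of T indexed by α_i to the columns outside β_i is linearly dependent over 𝕂 (in particular this holds whenever |α_i| > m − |β_i|), then there exist an L×L matrix G₁ over 𝕂 with zero diagonal entries and I − G₁ invertible and an L×m matrix U₁ over 𝕂 such that: (G₁)_{kj} = (G₀)_{kj} for every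 entry except possibly (i,j) with j ∈ α_i; (U₁)_{kj} = (U₀)_{kj} for every entry except possibly (i,k) with k ∈ β_i; (G₁, U₁) ≠ (G₀, U₀); and (I−G₁)⁻¹ U₁ = T. -/
/-!
A dependence relation `c` among the rows of `T` indexed by `αi`, restricted to the columns
outside `βi`, yields a rank-one change of row `i`: `G₁ = G₀ + ε eᵢ cᵀ` and
`U₁ = (I - G₁) T = U₀ - ε eᵢ (cᵀ T)`. As `c` is supported on `αi` and `cᵀ T` vanishes outside
`βi`, this respects the parametrization pattern and the zero diagonal, and it leaves `T`
unchanged as soon as `I - G₁` is invertible. Since `det (I - G₀ - ε eᵢ cᵀ)` is a polynomial in `ε`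
with nonzero constant term `det (I - G₀)`, over an infinite field some `ε ≠ 0` achieves this.
-/

open Matrix

namespace Matrix

open Polynomial in
theorem exists_ne_zero_isUnit_det_add_smul {K n : Type*} [Field K] [Infinite K] [Fintype n]
    [DecidableEq n] {A : Matrix n n K} (hA : IsUnit A.det) (B : Matrix n n K) :
    ∃ ε : K, ε ≠ 0 ∧ IsUnit (A + ε • B).det := by
  set q : K[X] := det ((X : K[X]) • B.map C + A.map C)
  have hq : q.coeff 0 ≠ 0 := by
    rw [coeff_det_X_add_C_zero]
    exact hA.ne_zero
  have hXq : X * q ≠ 0 := mul_ne_zero X_ne_zero fun h => hq (by rw [h, coeff_zero])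
  obtain ⟨ε, hε⟩ : ∃ ε, (X * q).eval ε ≠ 0 := by
    by_contra! h
    exact hXq (Polynomial.funext fun r => by simp [h r])
  have heval : q.eval ε = (A + ε • B).det := by
    rw [← coe_evalRingHom, RingHom.map_det]
    congr 1
    ext i j
    simp [add_comm, mul_comm ε]
  rw [eval_mul, eval_X, heval] at hε
  exact ⟨ε, left_ne_zero_of_mul hε, isUnit_iff_ne_zero.mpr (right_ne_zero_of_mul hε)⟩

theorem exists_vecMul_eq_zero_of_not_linearIndependent {R n p : Type*} [Ring R] [Fintype n]
    {T : Matrix n p R} {s : Finset n} {t : Finset p}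
    (h : ¬ LinearIndependent R fun j : s => fun k : t => T j k) :
    ∃ c : n → R, c ≠ 0 ∧ (∀ j ∉ s, c j = 0) ∧ ∀ k ∈ t, (c ᵥ* T) k = 0 := by
  classical
  obtain ⟨g, hg, j₀, hj₀⟩ := Fintype.not_linearIndependent_iff.mp h
  set c : n → R := fun j => if hj : j ∈ s then g ⟨j, hj⟩ else 0
  have hcs : ∀ j ∉ s, c j = 0 := fun j hj => dif_neg hj
  refine ⟨c, fun hc => hj₀ ?_, hcs, fun k hk => ?_⟩
  · simpa [c] using congrFun hc j₀
  calc (c ᵥ* T) k = ∑ j ∈ s, c j * T j k :=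
        (Finset.sum_subset s.subset_univ fun j _ hj => by rw [hcs j hj, zero_mul]).symm
    _ = ∑ j : s, g j * T j k := by rw [← Finset.sum_coe_sort s]; simp [c]
    _ = 0 := by simpa using congrFun hg ⟨k, hk⟩

theorem vecMulVec_single_one_apply_eq_zero {α n p : Type*} [MulZeroOneClass α] [DecidableEq n]
    {i k : n} {r : p → α} {j : p} (h : k ≠ i ∨ r j = 0) :
    vecMulVec (Pi.single i 1) r k j = 0 := by
  rcases h with hk | hr
  · rw [vecMulVec_apply, Pi.single_eq_of_ne hk, zero_mul]
  · rw [vecMulVec_apply, hr, mul_zero]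

end Matrix

theorem non_identifiability_of_rank_deficiency_general
    {𝕂 : Type*} [Field 𝕂] [Infinite 𝕂] (L m : ℕ)
    (G₀ : Matrix (Fin L) (Fin L) 𝕂) (U₀ : Matrix (Fin L) (Fin m) 𝕂)
    (hG₀d : ∀ i : Fin L, G₀ i i = 0)
    (hG₀inv : IsUnit (1 - G₀).det)
    (i : Fin L) (αi : Finset (Fin L)) (hαi : i ∉ αi) (βi : Finset (Fin m))
    (hdep : ¬ LinearIndependent 𝕂
      (fun j : (αi : Finset (Fin L)) => fun k : (βiᶜ : Finset (Fin m)) =>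
        ((1 - G₀)⁻¹ * U₀) (j : Fin L) (k : Fin m))) :
    ∃ (G₁ : Matrix (Fin L) (Fin L) 𝕂) (U₁ : Matrix (Fin L) (Fin m) 𝕂),
      (∀ i : Fin L, G₁ i i = 0) ∧
      IsUnit (1 - G₁).det ∧
      (∀ (k : Fin L) (j : Fin L), k ≠ i ∨ j ∉ αi → G₁ k j = G₀ k j) ∧
      (∀ (k : Fin L) (j : Fin m), k ≠ i ∨ j ∉ βi → U₁ k j = U₀ k j) ∧
      (G₁, U₁) ≠ (G₀, U₀) ∧
      (1 - G₁)⁻¹ * U₁ = (1 - G₀)⁻¹ * U₀ := by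
  set T := (1 - G₀)⁻¹ * U₀
  obtain ⟨c, hc, hcα, hcT⟩ := exists_vecMul_eq_zero_of_not_linearIndependent hdep
  set V := vecMulVec (Pi.single i (1 : 𝕂)) c
  obtain ⟨ε, hε, hdet⟩ := exists_ne_zero_isUnit_det_add_smul hG₀inv (-V)
  rw [smul_neg, ← sub_eq_add_neg, sub_sub] at hdet
  have hU₁ : (1 - (G₀ + ε • V)) * T = U₀ - ε • vecMulVec (Pi.single i 1) (c ᵥ* T) := by
    rw [← sub_sub, Matrix.sub_mul, mul_nonsing_inv_cancel_left _ _ hG₀inv, Matrix.smul_mul,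
      vecMulVec_mul]
  refine ⟨G₀ + ε • V, (1 - (G₀ + ε • V)) * T, fun k => ?_, hdet, fun k j hkj => ?_,
    fun k j hkj => ?_, fun h => ?_, nonsing_inv_mul_cancel_left _ _ hdet⟩
  · have hVk : V k k = 0 := vecMulVec_single_one_apply_eq_zero <| by
      rcases eq_or_ne k i with rfl | hk
      exacts [Or.inr (hcα k hαi), Or.inl hk]
    rw [Matrix.add_apply, Matrix.smul_apply, hG₀d, hVk, smul_zero, add_zero]
  · have hVkj : V k j = 0 := vecMulVec_single_one_apply_eq_zero (hkj.imp_right (hcα j))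
    rw [Matrix.add_apply, Matrix.smul_apply, hVkj, smul_zero, add_zero]
  · rw [hU₁, Matrix.sub_apply, Matrix.smul_apply, vecMulVec_single_one_apply_eq_zero
      (hkj.imp_right fun hj => hcT j (Finset.mem_compl.2 hj)), smul_zero, sub_zero]
  · have hV : ε • V = 0 := add_eq_left.mp (Prod.ext_iff.mp h).1
    exact smul_ne_zero hε hc <| funext fun j => by
      simpa [V, vecMulVec_apply] using congrFun (congrFun hV i) j

/-- Necessity part of Theorem 2 of the paper: over an infinite field, if for some row `i`
the rows of `T := (I-G₀)⁻¹ U₀` indexed by `α i`, restricted to the columns outside `β i`,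
are linearly dependent, then there is a second, distinct network model matching the same
parametrization pattern (differing from `(G₀, U₀)` only in row `i`, at positions `αi` of `G`
and `βi` of `U`) with the same network transfer matrix `T`. -/
theorem non_identifiability_of_rank_deficiency
    {𝕂 : Type*} [Field 𝕂] [Infinite 𝕂] (L m : ℕ) (hL : 0 < L) (hm : 0 < m)
    (G₀ : Matrix (Fin L) (Fin L) 𝕂) (U₀ : Matrix (Fin L) (Fin m) 𝕂)
    (hG₀d : ∀ i : Fin L, G₀ i i = 0)
    (hG₀inv : IsUnit (1 - G₀).det)
    (i : Fin L) (αi : Finset (Fin L)) (hαi : i ∉ αi) (βi : Finset (Fin m))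
    (hdep : ¬ LinearIndependent 𝕂
      (fun j : (αi : Finset (Fin L)) => fun k : (βiᶜ : Finset (Fin m)) =>
        ((1 - G₀)⁻¹ * U₀) (j : Fin L) (k : Fin m))) :
    ∃ (G₁ : Matrix (Fin L) (Fin L) 𝕂) (U₁ : Matrix (Fin L) (Fin m) 𝕂),
      (∀ i : Fin L, G₁ i i = 0) ∧
      IsUnit (1 - G₁).det ∧
      (∀ (k : Fin L) (j : Fin L), k ≠ i ∨ j ∉ αi → G₁ k j = G₀ k j) ∧
      (∀ (k : Fin L) (j : Fin m), k ≠ i ∨ j ∉ βi → U₁ k j = U₀ k j) ∧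
      (G₁, U₁) ≠ (G₀, U₀) ∧
      (1 - G₁)⁻¹ * U₁ = (1 - G₀)⁻¹ * U₀ :=
  non_identifiability_of_rank_deficiency_general L m G₀ U₀ hG₀d hG₀inv i αi hαi βi hdep
end

section
/- Let 𝕂 be an infinite field, L, m positive integers, and for each i ∈ {1,…,L} fix sets α_i ⊆ {1,…,L}\{i} and β_i ⊆ {1,…,m}. Let G₀ be an L×L matrix over 𝕂 with zero diagonal entries such that I − G₀ is invertible, let U₀ be an L×m matrix over 𝕂, and set T := (I−G₀)⁻¹ U₀. Then the following are equivalent: (i) every pair (G₁, U₁) with G₁ an L×L matrix over 𝕂 with zero diagonal and I − G₁ invertible, U₁ an L×m matrix over 𝕂, satisfying (G₁)_{ij} = (G₀)_{ij} for all i and j ∉ α_i, (U₁)_{ik} = (U₀)_{ik} for all i and k ∉ β_i, and (I−G₁)⁻¹ U₁ = T, equals (G₀, U₀); (ii) for every i ∈ {1,…,L}, the family of row vectors obtained by restricting the rows of T indexed by α_i to the columns outside β_i is linearly independent over 𝕂 (which in particular forces |α_i| + |β_i| ≤ m for every i). -/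
/-!
Put `T = (1 - G₀)⁻¹ U₀`. A model `(G₁, U₁)` with `1 - G₁` invertible has transfer matrix `T`
iff `U₁ = (1 - G₁) T`, and then `U₁ - U₀ = -(G₁ - G₀) T`. So the models of the set with transfer
matrix `T` are parametrized by the perturbations `Δ = G₁ - G₀` that vanish off the pattern `α`,
for which `Δ T` vanishes off the pattern `β`, and for which `1 - G₀ - Δ` stays invertible. Read
row by row, a nonzero `Δ` of the first two kinds is a nontrivial linear relation among the rows
of `T` indexed by `α i`, restricted to the columns outside `β i`. Conversely any such direction
`Δ` can be scaled by some `t ≠ 0` so that `1 - G₀ - t Δ` is invertible: `det (1 - G₀ - t Δ)` is a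
polynomial in `t` which does not vanish at `0`, and the field is infinite.
-/

open Matrix Polynomial

namespace Matrix

variable {m n p R K : Type*}

def SupportedIn [Zero R] (A : Matrix m n R) (s : m → Finset n) : Prop :=
  ∀ i j, j ∉ s i → A i j = 0

theorem SupportedIn.mul_apply [Fintype n] [NonUnitalNonAssocSemiring R] {A : Matrix m n R}
    {s : m → Finset n} (hA : A.SupportedIn s) (B : Matrix n p R) (i : m) (k : p) :
    (A * B) i k = ∑ j ∈ s i, A i j * B j k := by
  rw [Matrix.mul_apply]
  exact (Finset.sum_subset (Finset.subset_univ _) fun j _ hj => by rw [hA i j hj, zero_mul]).symm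

theorem forall_linearIndependent_iff_eq_zero_of_supportedIn [Fintype n] [Fintype p]
    [DecidableEq p] [Ring R] (T : Matrix n p R) (α : n → Finset n) (β : n → Finset p) :
    (∀ i, LinearIndependent R fun j : α i => fun k : ((β i)ᶜ : Finset p) => T j k) ↔
      ∀ Δ : Matrix n n R, Δ.SupportedIn α → (Δ * T).SupportedIn β → Δ = 0 := by
  have hrow (i : n) : (LinearIndependent R fun j : α i => fun k : ((β i)ᶜ : Finset p) => T j k) ↔
      _ :=
    linearIndepOn_finset_iff (v := fun j (k : ((β i)ᶜ : Finset p)) => T j k) (s := α i)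
  simp only [hrow]
  constructor
  · intro hT Δ hΔ hΔT
    ext i j
    by_cases hj : j ∈ α i
    · refine hT i (Δ i) ?_ j hj
      funext k
      simpa [Finset.sum_apply, hΔ.mul_apply] using hΔT i k (Finset.mem_compl.1 k.2)
    · exact hΔ i j hj
  · intro hΔ i f hf j hj
    classical
    let Δ : Matrix n n R := of fun r l => if r = i ∧ l ∈ α i then f l else 0
    have hΔα : Δ.SupportedIn α := fun r l hl => if_neg (by rintro ⟨rfl, h⟩; exact hl h)
    have hΔβ : (Δ * T).SupportedIn β := by
      intro r k hk
      rw [hΔα.mul_apply]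
      by_cases hr : r = i
      · subst hr
        simpa [Δ, Finset.sum_apply] using congr_fun hf ⟨k, Finset.mem_compl.2 hk⟩
      · simp [Δ, hr]
    simpa [Δ, hj] using congr_fun (congr_fun (hΔ Δ hΔα hΔβ) i) j

theorem exists_ne_zero_isUnit_det_sub_smul [Fintype n] [DecidableEq n] [Field K] [Infinite K]
    {A : Matrix n n K} (hA : IsUnit A.det) (B : Matrix n n K) :
    ∃ t : K, t ≠ 0 ∧ IsUnit (A - t • B).det := by
  classical
  let q : K[X] := (A.map C - (X : K[X]) • B.map C).det
  have hq (t : K) : q.eval t = (A - t • B).det := by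
    rw [← coe_evalRingHom, RingHom.map_det]
    congr 1
    ext
    simpa using mul_comm _ _
  have hq0 : q ≠ 0 := fun h =>
    hA.ne_zero <| by rw [← sub_zero A, ← zero_smul K B, ← hq, h, eval_zero]
  obtain ⟨t, ht⟩ := Infinite.exists_notMem_finset (insert 0 q.roots.toFinset)
  rw [Finset.mem_insert, not_or, Multiset.mem_toFinset, mem_roots hq0, IsRoot, hq] at ht
  exact ⟨t, ht.1, isUnit_iff_ne_zero.2 ht.2⟩

end Matrix

theorem global_identifiability_iff_rank_condition_general
    {𝕂 : Type*} [Field 𝕂] [Infinite 𝕂] (L m : ℕ)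
    (α : Fin L → Finset (Fin L)) (hα : ∀ i : Fin L, i ∉ α i)
    (β : Fin L → Finset (Fin m))
    (G₀ : Matrix (Fin L) (Fin L) 𝕂) (U₀ : Matrix (Fin L) (Fin m) 𝕂)
    (hG₀d : ∀ i : Fin L, G₀ i i = 0)
    (hG₀inv : IsUnit (1 - G₀).det) :
    (∀ (G₁ : Matrix (Fin L) (Fin L) 𝕂) (U₁ : Matrix (Fin L) (Fin m) 𝕂),
        (∀ i : Fin L, G₁ i i = 0) →
        IsUnit (1 - G₁).det →
        (∀ i j : Fin L, j ∉ α i → G₁ i j = G₀ i j) →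
        (∀ (i : Fin L) (k : Fin m), k ∉ β i → U₁ i k = U₀ i k) →
        (1 - G₁)⁻¹ * U₁ = (1 - G₀)⁻¹ * U₀ →
        G₁ = G₀ ∧ U₁ = U₀)
    ↔
    (∀ i : Fin L,
      LinearIndependent 𝕂
        (fun j : (α i : Finset (Fin L)) => fun k : ((β i)ᶜ : Finset (Fin m)) =>
          ((1 - G₀)⁻¹ * U₀) (j : Fin L) (k : Fin m))) := by
  set T := (1 - G₀)⁻¹ * U₀
  have hT : (1 - G₀) * T = U₀ := mul_nonsing_inv_cancel_left _ _ hG₀inv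
  rw [forall_linearIndependent_iff_eq_zero_of_supportedIn]
  constructor
  · intro hid Δ hΔ hΔT
    obtain ⟨t, ht, hdet⟩ := exists_ne_zero_isUnit_det_sub_smul hG₀inv Δ
    have hsub : 1 - (G₀ + t • Δ) = 1 - G₀ - t • Δ := by abel
    have hU₁ : (1 - (G₀ + t • Δ)) * T = U₀ - t • (Δ * T) := by
      rw [hsub, Matrix.sub_mul, hT, Matrix.smul_mul]
    rw [← hsub] at hdet
    obtain ⟨hG, -⟩ := hid (G₀ + t • Δ) (U₀ - t • (Δ * T))
      (fun i => by simp [hG₀d, hΔ i i (hα i)]) hdet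
      (fun i j hj => by simp [hΔ i j hj]) (fun i k hk => by simp [hΔT i k hk])
      (by rw [← hU₁, nonsing_inv_mul_cancel_left _ _ hdet])
    simpa [ht] using hG
  · intro hLI G₁ U₁ _ hdet hG hU hT₁
    have h₁ : (1 - G₁) * T = U₁ := by rw [← hT₁, mul_nonsing_inv_cancel_left _ _ hdet]
    have hΔT : (G₁ - G₀) * T = U₀ - U₁ := by rw [← hT, ← h₁, ← Matrix.sub_mul]; congr 1; abel
    have hG₁ : G₁ = G₀ := sub_eq_zero.1 <| hLI _ (fun i j hj => by simp [hG i j hj])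
      fun i k hk => by simp [hΔT, hU i k hk]
    exact ⟨hG₁, by rw [← h₁, hG₁, hT]⟩

/-- Theorem 2, part 1 of the paper: over an infinite field, a network model set with
parametrized entry patterns `α i` (row `i` of `G`, off-diagonal) and `β i` (row `i` of `U`)
is globally network identifiable at the model `(G₀, U₀)` if and only if, for every `i`,
the rows of `T := (I-G₀)⁻¹ U₀` indexed by `α i`, restricted to the columns outside `β i`,
are linearly independent. -/
theorem global_identifiability_iff_rank_condition
    {𝕂 : Type*} [Field 𝕂] [Infinite 𝕂] (L m : ℕ) (hL : 0 < L) (hm : 0 < m)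
    (α : Fin L → Finset (Fin L)) (hα : ∀ i : Fin L, i ∉ α i)
    (β : Fin L → Finset (Fin m))
    (G₀ : Matrix (Fin L) (Fin L) 𝕂) (U₀ : Matrix (Fin L) (Fin m) 𝕂)
    (hG₀d : ∀ i : Fin L, G₀ i i = 0)
    (hG₀inv : IsUnit (1 - G₀).det) :
    (∀ (G₁ : Matrix (Fin L) (Fin L) 𝕂) (U₁ : Matrix (Fin L) (Fin m) 𝕂),
        (∀ i : Fin L, G₁ i i = 0) →
        IsUnit (1 - G₁).det →
        (∀ i j : Fin L, j ∉ α i → G₁ i j = G₀ i j) →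
        (∀ (i : Fin L) (k : Fin m), k ∉ β i → U₁ i k = U₀ i k) →
        (1 - G₁)⁻¹ * U₁ = (1 - G₀)⁻¹ * U₀ →
        G₁ = G₀ ∧ U₁ = U₀)
    ↔
    (∀ i : Fin L,
      LinearIndependent 𝕂
        (fun j : (α i : Finset (Fin L)) => fun k : ((β i)ᶜ : Finset (Fin m)) =>
          ((1 - G₀)⁻¹ * U₀) (j : Fin L) (k : Fin m))) :=
  global_identifiability_iff_rank_condition_general L m α hα β G₀ U₀ hG₀d hG₀inv
end

section
/- Let 𝕂 be a field and let A, B ∈ 𝕂. Let T₂ be the 3×2 matrix over 𝕂 with rows (1, 0), ((A+1)·B, 1), (A+1, 0), and let R be the 3×2 matrix with rows (1, 0), (0, 1), (1, 0). For every X ∈ 𝕂 define G_X as the 3×3 matrix with rows (0, 0, 0), ((A+1)·(B − X), 0, X), (A, 0, 0). Then for every X ∈ 𝕂: G_X has zero diagonal entries, det(I − G_X) = 1 (so I − G_X is invertible), and (I − G_X)⁻¹ R = T₂; moreover the map X ↦ G_X is injective, so if 𝕂 is infinite there are infinitely many distinct module matrices producing the same network transfer matrix T₂. -/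
/-!
Expanding `det (I - G_X)` along its first row `(1, 0, 0)` leaves the triangular minor
`[[1, -X], [0, 1]]`, so `det (I - G_X) = 1`. The transfer matrix is checked in the direction
`(I - G_X) T₂ = R`, which needs no inverse: the `X`-dependence cancels because
`(A + 1)(B - X) + X(A + 1) = (A + 1)B`.
-/

open Matrix

/-- The one-parameter family of module matrices of Example 1 of the paper at system `S₂`. -/
def exampleG₂ {𝕂 : Type*} [Field 𝕂] (A B X : 𝕂) : Matrix (Fin 3) (Fin 3) 𝕂 :=
  !![0, 0, 0; (A + 1) * (B - X), 0, X; A, 0, 0]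

section ExampleG₂

variable {𝕂 : Type*} [Field 𝕂] (A B : 𝕂)

theorem exampleG₂_apply_self (X : 𝕂) (i : Fin 3) : exampleG₂ A B X i i = 0 := by
  fin_cases i <;> rfl

theorem one_sub_exampleG₂ (X : 𝕂) :
    1 - exampleG₂ A B X = !![1, 0, 0; -((A + 1) * (B - X)), 1, -X; -A, 0, 1] := by
  ext i j
  fin_cases i <;> fin_cases j <;> simp [exampleG₂, one_apply]

theorem det_one_sub_exampleG₂ (X : 𝕂) : (1 - exampleG₂ A B X).det = 1 := by
  rw [one_sub_exampleG₂, det_fin_three]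
  simp

theorem one_sub_exampleG₂_mul_transfer (X : 𝕂) :
    (1 - exampleG₂ A B X) * !![1, 0; (A + 1) * B, 1; A + 1, 0] =
      (!![1, 0; 0, 1; 1, 0] : Matrix (Fin 3) (Fin 2) 𝕂) := by
  rw [one_sub_exampleG₂]
  ext i j
  fin_cases i <;> fin_cases j <;> simp [mul_apply, Fin.sum_univ_three]
  ring

theorem inv_one_sub_exampleG₂_mul_input (X : 𝕂) :
    (1 - exampleG₂ A B X)⁻¹ * (!![1, 0; 0, 1; 1, 0] : Matrix (Fin 3) (Fin 2) 𝕂) =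
      !![1, 0; (A + 1) * B, 1; A + 1, 0] := by
  rw [← one_sub_exampleG₂_mul_transfer A B X, nonsing_inv_mul_cancel_left]
  simp [det_one_sub_exampleG₂]

theorem exampleG₂_injective : Function.Injective (exampleG₂ A B) := fun X Y h => by
  simpa [exampleG₂] using congrFun (congrFun h 1) 2

end ExampleG₂

/-- Non-identifiability at system `S₂` of Example 1 of the paper: for every `X`, the hollow
module matrix `G_X = [[0,0,0],[(A+1)(B-X),0,X],[A,0,0]]` satisfies `det (I - G_X) = 1` and
produces the same network transfer matrix `T₂ = (I - G_X)⁻¹ R = [[1,0],[(A+1)B,1],[A+1,0]]`;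
the map `X ↦ G_X` is injective, so over an infinite field there are infinitely many distinct
module matrices producing the transfer matrix `T₂`. -/
theorem example1_S2_not_identifiable {𝕂 : Type*} [Field 𝕂] (A B : 𝕂) :
    (∀ X : 𝕂,
      (∀ i : Fin 3, exampleG₂ A B X i i = 0) ∧
      (1 - exampleG₂ A B X).det = 1 ∧
      (1 - exampleG₂ A B X)⁻¹ * (!![1, 0; 0, 1; 1, 0] : Matrix (Fin 3) (Fin 2) 𝕂) =
        (!![1, 0; (A + 1) * B, 1; A + 1, 0] : Matrix (Fin 3) (Fin 2) 𝕂)) ∧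
    Function.Injective (fun X : 𝕂 => exampleG₂ A B X) ∧
    (Infinite 𝕂 →
      {G : Matrix (Fin 3) (Fin 3) 𝕂 |
        (∀ i : Fin 3, G i i = 0) ∧
        (1 - G)⁻¹ * (!![1, 0; 0, 1; 1, 0] : Matrix (Fin 3) (Fin 2) 𝕂) =
          (!![1, 0; (A + 1) * B, 1; A + 1, 0] : Matrix (Fin 3) (Fin 2) 𝕂)}.Infinite) :=
  ⟨fun X => ⟨exampleG₂_apply_self A B X, det_one_sub_exampleG₂ A B X,
      inv_one_sub_exampleG₂_mul_input A B X⟩,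
    exampleG₂_injective A B,
    fun _ => Set.infinite_of_injective_forall_mem (exampleG₂_injective A B)
      fun X => ⟨exampleG₂_apply_self A B X, inv_one_sub_exampleG₂_mul_input A B X⟩⟩
end
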